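/- Every vector w in the subspace S²_{r,s}(V) is fixed by the Benkart–Witherspoon R-matrix: R w = w. -/

import Mathlib

open Matrix Kronecker BigOperators

/-- The `n × n` matrix unit `E i j` over `ℂ`. -/
noncomputable def E (n : ℕ) (i j : Fin n) : Matrix (Fin n) (Fin n) ℂ :=
  Matrix.single i j 1

/-- The Benkart–Witherspoon R-matrix on `V ⊗ V`. -/
noncomputable def BWR (n : ℕ) (r s : ℂ) : Matrix (Fin n × Fin n) (Fin n × Fin n) ℂ :=
  (∑ i : Fin n, E n i i ⊗ₖ E n i i)
  + r • (∑ i : Fin n, ∑ j : Fin n, if i < j then E n j i ⊗ₖ E n i j else 0)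
  + s⁻¹ • (∑ i : Fin n, ∑ j : Fin n, if i < j then E n i j ⊗ₖ E n j i else 0)
  + (1 - r * s⁻¹) • (∑ i : Fin n, ∑ j : Fin n, if i < j then E n j j ⊗ₖ E n i i else 0)

/-- The `(r,s)`-symmetric square `S²_{r,s}(V) ⊆ V ⊗ V`, with `V ⊗ V` modelled as
`Fin n × Fin n → ℂ` and `v_i ⊗ v_j = Pi.single (i, j) 1`. -/
noncomputable def Ssub (n : ℕ) (s : ℂ) : Submodule ℂ (Fin n × Fin n → ℂ) :=
  Submodule.span ℂ ({ f | ∃ i : Fin n, f = (Pi.single (i, i) 1 : Fin n × Fin n → ℂ) } ∪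
    { f | ∃ i j : Fin n, i < j ∧
      f = (Pi.single (i, j) 1 : Fin n × Fin n → ℂ) + s • (Pi.single (j, i) 1 : Fin n × Fin n → ℂ) })

/-! For `i < j`, `R` fixes `v_i ⊗ v_i`, sends `v_i ⊗ v_j` to `r v_j ⊗ v_i` and `v_j ⊗ v_i` to
`s⁻¹ v_i ⊗ v_j + (1 - r s⁻¹) v_j ⊗ v_i`, so on `v_i ⊗ v_j + s v_j ⊗ v_i` the coefficients of
`v_j ⊗ v_i` add up to `r + s (1 - r s⁻¹) = s`. -/

section UpperTriangularSums

variable {α M : Type*} [Fintype α] [LinearOrder α] [AddCommMonoid M]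

lemma sum_sum_ite_lt_ite_eq (f : α → α → M) (p q : α) :
    ∑ i, ∑ j, (if i < j then if i = p then if j = q then f i j else 0 else 0 else 0) =
      if p < q then f p q else 0 := by
  rw [Fintype.sum_eq_single p fun i hi => by simp [hi],
    Fintype.sum_eq_single q fun j hj => by simp [hj]]
  simp

lemma sum_sum_ite_lt_ite_eq_swap (f : α → α → M) (p q : α) :
    ∑ i, ∑ j, (if i < j then if j = p then if i = q then f i j else 0 else 0 else 0) =
      if q < p then f q p else 0 := by
  rw [Fintype.sum_eq_single q fun i hi => by simp [hi],
    Fintype.sum_eq_single p fun j hj => by simp [hj]]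
  simp

end UpperTriangularSums

lemma E_kronecker_E_mulVec_single {n : ℕ} (a b c d p q : Fin n) :
    (E n a b ⊗ₖ E n c d) *ᵥ Pi.single (p, q) 1 =
      if b = p ∧ d = q then Pi.single (a, c) 1 else 0 := by
  rw [E, E, single_kronecker_single, single_mulVec_eq]
  split_ifs with h <;> simp_all

lemma ite_mulVec {m n α : Type*} [Fintype n] [NonUnitalNonAssocSemiring α] (c : Prop)
    [Decidable c] (A : Matrix m n α) (v : n → α) : (if c then A else 0) *ᵥ v = if c then A *ᵥ v else 0 := by
  split_ifs <;> simp

lemma BWR_mulVec_single (n : ℕ) (r s : ℂ) (p q : Fin n) :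
    BWR n r s *ᵥ Pi.single (p, q) 1 =
      (if p = q then Pi.single (p, p) 1 else 0)
      + r • (if p < q then Pi.single (q, p) 1 else 0)
      + s⁻¹ • (if q < p then Pi.single (q, p) 1 else 0)
      + (1 - r * s⁻¹) • (if q < p then Pi.single (p, q) 1 else 0) := by
  simp only [BWR, add_mulVec, smul_mulVec, sum_mulVec, ite_mulVec, E_kronecker_E_mulVec_single,
    ite_and, sum_sum_ite_lt_ite_eq, sum_sum_ite_lt_ite_eq_swap]
  simp

lemma BWR_mulVec_single_diag (n : ℕ) (r s : ℂ) (i : Fin n) :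
    BWR n r s *ᵥ Pi.single (i, i) 1 = Pi.single (i, i) 1 := by
  rw [BWR_mulVec_single]
  simp

lemma BWR_mulVec_single_of_lt (n : ℕ) (r s : ℂ) {i j : Fin n} (hij : i < j) :
    BWR n r s *ᵥ Pi.single (i, j) 1 = r • Pi.single (j, i) 1 := by
  rw [BWR_mulVec_single]
  simp [hij, hij.ne, hij.not_gt]

lemma BWR_mulVec_single_of_gt (n : ℕ) (r s : ℂ) {i j : Fin n} (hij : i < j) :
    BWR n r s *ᵥ Pi.single (j, i) 1 =
      s⁻¹ • Pi.single (i, j) 1 + (1 - r * s⁻¹) • Pi.single (j, i) 1 := by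
  rw [BWR_mulVec_single]
  simp [hij, hij.ne', hij.not_gt]

theorem stmt7_general (n : ℕ) (r s : ℂ) (hs : s ≠ 0) :
    ∀ w ∈ Ssub n s, (BWR n r s).mulVec w = w := by
  intro w hw
  induction hw using Submodule.span_induction with
  | zero => simp
  | add a b _ _ ha hb => rw [mulVec_add, ha, hb]
  | smul c a _ ha => rw [mulVec_smul, ha]
  | mem f hf =>
    rcases hf with ⟨i, rfl⟩ | ⟨i, j, hij, rfl⟩
    · exact BWR_mulVec_single_diag n r s i
    · rw [mulVec_add, mulVec_smul, BWR_mulVec_single_of_lt n r s hij,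
        BWR_mulVec_single_of_gt n r s hij]
      match_scalars <;> field_simp
      ring

/-- Every vector of `S²_{r,s}(V)` is fixed by the Benkart–Witherspoon R-matrix. -/
theorem stmt7 (n : ℕ) (hn : 2 ≤ n) (r s : ℂ) (hr : r ≠ 0) (hs : s ≠ 0) (hrs : r ≠ s) :
    ∀ w ∈ Ssub n s, (BWR n r s).mulVec w = w :=
  stmt7_general n r s hs
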